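/- arXiv:2409.18079 — 2 statements merged into one kernel-verified Lean document; each statement's English description precedes it below -/
import Mathlib

section
/- Every planar quasi-homogeneous polynomial vector field P of type t̂ = (t₁,t₂) and degree k admits a unique conservative–dissipative decomposition P = X_h + μ·D₀, where D₀ = (t₁x, t₂y), h is a quasi-homogeneous polynomial of type t̂ and degree k + t₁ + t₂, and μ is a quasi-homogeneous polynomial of type t̂ and degree k. Moreover h = (D₀ ∧ P)/(k + t₁ + t₂) and μ = div(P)/(k + t₁ + t₂). -/
/-
Over `ℝ`, the scaling identity `f(ε^{t₁} x, ε^{t₂} y) = ε^k f(x, y)` says that `f` is weighted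
homogeneous of degree `k`: for fixed `(x, y)` both sides are polynomials in `ε`, whose
coefficients are the values of the weighted homogeneous components of `f`. Hence Euler's identity
`D₀ · ∇f = k f` holds for such `f`, and `D₀ · ∇f = D₀ ∧ X_f`.

Since `D₀ ∧ D₀ = 0`, `div X_h = 0` and `div (μ D₀) = D₀ · ∇μ + (t₁ + t₂) μ`, every splitting
`P = X_h + μ D₀` gives `D₀ ∧ P = (k + t₁ + t₂) h` and `div P = (k + t₁ + t₂) μ`, which is uniqueness
together with the formulas. Conversely, Euler's identity for the two components of `P` gives
`X_{D₀ ∧ P} + (div P) D₀ = (k + t₁ + t₂) P`, which is existence.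
-/

open MvPolynomial

def IsQH (t : Fin 2 → ℕ) (k : ℕ) (f : MvPolynomial (Fin 2) ℝ) : Prop :=
  ∀ (ε : ℝ) (x : Fin 2 → ℝ),
    eval (fun i => ε ^ t i * x i) f = ε ^ k * eval x f

def IsQHVF (t : Fin 2 → ℕ) (k : ℕ) (F : Fin 2 → MvPolynomial (Fin 2) ℝ) : Prop :=
  ∀ j, IsQH t (k + t j) (F j)

/-- Planar Hamiltonian vector field `X_h = (−∂h/∂y, ∂h/∂x)`. -/
noncomputable def ham (h : MvPolynomial (Fin 2) ℝ) : Fin 2 → MvPolynomial (Fin 2) ℝ :=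
  ![-(pderiv 1 h), pderiv 0 h]

/-- The vector field `D₀ = (t₁x, t₂y)`. -/
noncomputable def D0 (t : Fin 2 → ℕ) : Fin 2 → MvPolynomial (Fin 2) ℝ :=
  ![C ((t 0 : ℝ)) * X 0, C ((t 1 : ℝ)) * X 1]

/-- Wedge product `(P,Q) ∧ (R,S) = PS − QR`. -/
noncomputable def wedge (F G : Fin 2 → MvPolynomial (Fin 2) ℝ) : MvPolynomial (Fin 2) ℝ :=
  F 0 * G 1 - F 1 * G 0

/-- Divergence of a planar vector field. -/
noncomputable def divg (F : Fin 2 → MvPolynomial (Fin 2) ℝ) : MvPolynomial (Fin 2) ℝ :=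
  pderiv 0 (F 0) + pderiv 1 (F 1)

namespace MvPolynomial

variable {R σ : Type*}

section CommSemiring

variable [CommSemiring R]

lemma pderiv_comm (i j : σ) (f : MvPolynomial σ R) :
    pderiv i (pderiv j f) = pderiv j (pderiv i f) := by
  classical
  induction f using MvPolynomial.induction_on with
  | C a => simp
  | add p q hp hq => simp [hp, hq]
  | mul_X p l hp =>
    simp only [pderiv_mul, map_add, pderiv_X, hp, Pi.single_apply]
    split_ifs <;> simp [add_right_comm]

noncomputable def weightedScaling (w : σ → ℕ) (x : σ → R) : MvPolynomial σ R →ₐ[R] Polynomial R :=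
  aeval fun i => Polynomial.C (x i) * Polynomial.X ^ w i

variable {w : σ → ℕ} {k : ℕ} {f : MvPolynomial σ R}

lemma eval_weightedScaling (x : σ → R) (ε : R) (f : MvPolynomial σ R) :
    (weightedScaling w x f).eval ε = eval (fun i => ε ^ w i * x i) f := by
  induction f using MvPolynomial.induction_on with
  | C a => simp [weightedScaling]
  | add p q hp hq => simp [hp, hq]
  | mul_X p i hp => simp [← hp, weightedScaling]; ring

lemma weightedScaling_monomial (x : σ → R) (d : σ →₀ ℕ) (c : R) :
    weightedScaling w x (monomial d c) =
      Polynomial.monomial (Finsupp.weight w d) (eval x (monomial d c)) := by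
  simp only [weightedScaling, aeval_monomial, eval_monomial, mul_pow, Finsupp.prod_mul, ← pow_mul,
    Finsupp.weight_apply, Finsupp.sum, smul_eq_mul]
  simp only [Polynomial.algebraMap_eq, Finsupp.prod, ← Polynomial.C_pow, ← map_prod,
    Finset.prod_pow_eq_pow_sum, ← Polynomial.C_mul_X_pow_eq_monomial, map_mul, mul_comm (w _)]
  ring

lemma coeff_weightedScaling (x : σ → R) (f : MvPolynomial σ R) (m : ℕ) :
    (weightedScaling w x f).coeff m = eval x (weightedHomogeneousComponent w m f) := by
  classical
  induction f using MvPolynomial.induction_on' with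
  | monomial d c =>
    rw [weightedScaling_monomial, Polynomial.coeff_monomial,
      weightedHomogeneousComponent_of_mem (isWeightedHomogeneous_monomial w d c rfl)]
    split_ifs <;> simp_all [eq_comm]
  | add p q hp hq => simp [hp, hq]

lemma IsWeightedHomogeneous.weightedScaling_eq (hf : IsWeightedHomogeneous w f k) (x : σ → R) :
    weightedScaling w x f = Polynomial.monomial k (eval x f) := by
  classical
  ext m
  rw [coeff_weightedScaling, weightedHomogeneousComponent_of_mem hf, Polynomial.coeff_monomial]
  rcases eq_or_ne m k with rfl | hm
  · simp
  · simp [hm, hm.symm]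

lemma IsWeightedHomogeneous.eval_pow_mul (hf : IsWeightedHomogeneous w f k) (ε : R) (x : σ → R) :
    eval (fun i => ε ^ w i * x i) f = ε ^ k * eval x f := by
  rw [← eval_weightedScaling, hf.weightedScaling_eq, Polynomial.eval_monomial, mul_comm]

end CommSemiring

lemma isWeightedHomogeneous_iff_forall_eval_pow_mul [CommRing R] [IsDomain R] [Infinite R]
    {w : σ → ℕ} {k : ℕ} {f : MvPolynomial σ R} :
    IsWeightedHomogeneous w f k ↔
      ∀ (ε : R) (x : σ → R), eval (fun i => ε ^ w i * x i) f = ε ^ k * eval x f := by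
  refine ⟨IsWeightedHomogeneous.eval_pow_mul, fun h d hd => ?_⟩
  have hscaling (x : σ → R) : weightedScaling w x f = Polynomial.monomial k (eval x f) :=
    Polynomial.funext fun ε => by
      rw [eval_weightedScaling, h, Polynomial.eval_monomial, mul_comm]
  by_contra hne
  have hcomponent : weightedHomogeneousComponent w (Finsupp.weight w d) f = 0 :=
    funext fun x => by
      rw [← coeff_weightedScaling, hscaling, Polynomial.coeff_monomial, if_neg (Ne.symm hne),
        map_zero]
  have := congrArg (coeff d) hcomponent
  rw [coeff_weightedHomogeneousComponent, if_pos rfl, coeff_zero] at this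
  exact hd this

end MvPolynomial

lemma isQH_iff_isWeightedHomogeneous {t : Fin 2 → ℕ} {k : ℕ} {f : MvPolynomial (Fin 2) ℝ} :
    IsQH t k f ↔ IsWeightedHomogeneous t f k :=
  isWeightedHomogeneous_iff_forall_eval_pow_mul.symm

section

variable {t : Fin 2 → ℕ}

lemma MvPolynomial.IsWeightedHomogeneous.wedge_D0_ham {n : ℕ} {f : MvPolynomial (Fin 2) ℝ}
    (hf : IsWeightedHomogeneous t f n) : wedge (D0 t) (ham f) = C (n : ℝ) * f := by
  have euler := hf.sum_weight_X_mul_pderiv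
  simp only [Fin.sum_univ_two, nsmul_eq_mul] at euler
  simp only [wedge, D0, ham, map_natCast, Matrix.cons_val_zero, Matrix.cons_val_one]
  linear_combination euler

lemma divg_ham (h : MvPolynomial (Fin 2) ℝ) : divg (ham h) = 0 := by
  simp [divg, ham, pderiv_comm (1 : Fin 2) 0 h]

lemma wedge_D0_ham_add_mul_D0 (h μ : MvPolynomial (Fin 2) ℝ) :
    wedge (D0 t) (fun j => ham h j + μ * D0 t j) = wedge (D0 t) (ham h) := by
  simp only [wedge]; ring

lemma divg_ham_add_mul_D0 (h μ : MvPolynomial (Fin 2) ℝ) :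
    divg (fun j => ham h j + μ * D0 t j) = wedge (D0 t) (ham μ) + C ((t 0 + t 1 : ℕ) : ℝ) * μ := by
  have hdivg := divg_ham h
  simp only [divg, ham, D0, wedge, Matrix.cons_val_zero, Matrix.cons_val_one, map_add, pderiv_mul,
    pderiv_C, pderiv_X_self] at hdivg ⊢
  rw [Nat.cast_add, map_add]
  linear_combination hdivg

lemma ham_C_mul (c : ℝ) (h : MvPolynomial (Fin 2) ℝ) (j : Fin 2) :
    ham (C c * h) j = C c * ham h j := by
  fin_cases j <;> simp [ham]

lemma isWeightedHomogeneous_D0 (j : Fin 2) : IsWeightedHomogeneous t (D0 t j) (t j) := by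
  fin_cases j <;> exact (isWeightedHomogeneous_X ℝ t _).C_mul _

variable {k : ℕ} {P : Fin 2 → MvPolynomial (Fin 2) ℝ}

lemma isWeightedHomogeneous_wedge_D0 (hP : ∀ j, IsWeightedHomogeneous t (P j) (k + t j)) :
    IsWeightedHomogeneous t (wedge (D0 t) P) (k + t 0 + t 1) := by
  have h01 := (isWeightedHomogeneous_D0 0).mul (hP 1)
  have h10 := (isWeightedHomogeneous_D0 1).mul (hP 0)
  rw [show t 0 + (k + t 1) = k + t 0 + t 1 by ring] at h01
  rw [show t 1 + (k + t 0) = k + t 0 + t 1 by ring] at h10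
  exact h01.sub h10

lemma isWeightedHomogeneous_divg (hP : ∀ j, IsWeightedHomogeneous t (P j) (k + t j)) :
    IsWeightedHomogeneous t (divg P) k :=
  ((hP 0).pderiv rfl).add ((hP 1).pderiv rfl)

lemma ham_wedge_D0_add_divg_mul_D0 (hP : ∀ j, IsWeightedHomogeneous t (P j) (k + t j))
    (j : Fin 2) :
    ham (wedge (D0 t) P) j + divg P * D0 t j = C ((k + t 0 + t 1 : ℕ) : ℝ) * P j := by
  have euler0 := (hP 0).wedge_D0_ham
  have euler1 := (hP 1).wedge_D0_ham
  simp only [wedge, ham, D0, Matrix.cons_val_zero, Matrix.cons_val_one, Nat.cast_add, map_add,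
    map_natCast] at euler0 euler1 ⊢
  fin_cases j <;> simp [divg, pderiv_X_of_ne (show (0 : Fin 2) ≠ 1 by decide),
    pderiv_X_of_ne (show (1 : Fin 2) ≠ 0 by decide)]
  · linear_combination euler0
  · linear_combination euler1

lemma forall_eq_ham_add_mul_D0_iff (hN : k + t 0 + t 1 ≠ 0)
    (hP : ∀ j, IsWeightedHomogeneous t (P j) (k + t j)) {h μ : MvPolynomial (Fin 2) ℝ}
    (hh : IsWeightedHomogeneous t h (k + t 0 + t 1)) (hμ : IsWeightedHomogeneous t μ k) :
    (∀ j, P j = ham h j + μ * D0 t j) ↔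
      h = C (((k + t 0 + t 1 : ℕ) : ℝ))⁻¹ * wedge (D0 t) P ∧
        μ = C (((k + t 0 + t 1 : ℕ) : ℝ))⁻¹ * divg P := by
  have hN' : ((k + t 0 + t 1 : ℕ) : ℝ) ≠ 0 := by exact_mod_cast hN
  have cancel (f : MvPolynomial (Fin 2) ℝ) :
      C (((k + t 0 + t 1 : ℕ) : ℝ))⁻¹ * (C ((k + t 0 + t 1 : ℕ) : ℝ) * f) = f := by
    rw [← mul_assoc, ← C_mul, inv_mul_cancel₀ hN', C_1, one_mul]
  constructor
  · intro hdec
    obtain rfl : P = fun j => ham h j + μ * D0 t j := funext hdec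
    constructor
    · rw [wedge_D0_ham_add_mul_D0, hh.wedge_D0_ham, cancel]
    · rw [divg_ham_add_mul_D0, hμ.wedge_D0_ham, ← add_mul, ← map_add, ← Nat.cast_add, ← add_assoc,
        cancel]
  · rintro ⟨rfl, rfl⟩ j
    rw [ham_C_mul, mul_assoc, ← mul_add, ham_wedge_D0_add_divg_mul_D0 hP, cancel]

end

/-- Conservative–dissipative splitting: every planar quasi-homogeneous vector field
`P` of type `t̂` and degree `k` decomposes uniquely as `P = X_h + μ·D₀` with
`h ∈ 𝒫^{t̂}_{k+|t̂|}` and `μ ∈ 𝒫^{t̂}_k`; moreover `h = (D₀ ∧ P)/(k+|t̂|)` and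
`μ = div(P)/(k+|t̂|)`. -/
theorem conservative_dissipative_splitting (t : Fin 2 → ℕ) (ht : ∀ i, 0 < t i) (k : ℕ)
    (P : Fin 2 → MvPolynomial (Fin 2) ℝ) (hP : IsQHVF t k P) :
    (∃! hm : MvPolynomial (Fin 2) ℝ × MvPolynomial (Fin 2) ℝ,
        IsQH t (k + t 0 + t 1) hm.1 ∧ IsQH t k hm.2 ∧
          ∀ j, P j = ham hm.1 j + hm.2 * D0 t j) ∧
    (∀ h μ : MvPolynomial (Fin 2) ℝ,
        IsQH t (k + t 0 + t 1) h → IsQH t k μ → (∀ j, P j = ham h j + μ * D0 t j) →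
          h = C (((k + t 0 + t 1 : ℕ) : ℝ))⁻¹ * wedge (D0 t) P ∧
          μ = C (((k + t 0 + t 1 : ℕ) : ℝ))⁻¹ * divg P) := by
  have hN : k + t 0 + t 1 ≠ 0 := by have := ht 0; omega
  have hP' j : IsWeightedHomogeneous t (P j) (k + t j) := isQH_iff_isWeightedHomogeneous.1 (hP j)
  have hchar h μ (hh : IsQH t (k + t 0 + t 1) h) (hμ : IsQH t k μ) :=
    forall_eq_ham_add_mul_D0_iff hN hP' (isQH_iff_isWeightedHomogeneous.1 hh)
      (isQH_iff_isWeightedHomogeneous.1 hμ)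
  have hh₀ : IsQH t (k + t 0 + t 1) (C (((k + t 0 + t 1 : ℕ) : ℝ))⁻¹ * wedge (D0 t) P) :=
    isQH_iff_isWeightedHomogeneous.2 ((isWeightedHomogeneous_wedge_D0 hP').C_mul _)
  have hμ₀ : IsQH t k (C (((k + t 0 + t 1 : ℕ) : ℝ))⁻¹ * divg P) :=
    isQH_iff_isWeightedHomogeneous.2 ((isWeightedHomogeneous_divg hP').C_mul _)
  refine ⟨⟨(_, _), ⟨hh₀, hμ₀, (hchar _ _ hh₀ hμ₀).2 ⟨rfl, rfl⟩⟩, ?_⟩,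
    fun h μ hh hμ => (hchar h μ hh hμ).1⟩
  rintro ⟨h, μ⟩ ⟨hh, hμ, hdec⟩
  exact Prod.ext_iff.2 ((hchar h μ hh hμ).1 hdec)
end

section
/- Let μ be a planar quasi-homogeneous polynomial of type t̂ and degree k and h* a quasi-homogeneous polynomial of type t̂ and degree l + |t̂|. Then μ·X_{h*} = X_{g} + ν·D₀, where g = ((l+|t̂|)/(k+l+|t̂|))·μ·h* and ν = (1/(k+l+|t̂|))·∇μ·X_{h*}, with D₀ = (t₁x, t₂y). -/
open MvPolynomial

/-!
Differentiating the defining relation `f(ε^t₁ x, ε^t₂ y) = ε^k f(x, y)` at `ε = 1` gives the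
weighted Euler identity `D₀ · ∇f = k f`. After multiplication by `k + l + |t̂|`, each coordinate
of the claimed identity is a linear combination of the Euler identities for `μ` and `h*`.
-/

namespace MvPolynomial

variable {σ : Type*} [Fintype σ] [DecidableEq σ]

theorem hasDerivAt_eval_weighted_scaling (t : σ → ℕ) (x : σ → ℝ) (f : MvPolynomial σ ℝ) :
    HasDerivAt (fun ε : ℝ => eval (fun i => ε ^ t i * x i) f)
      (eval x (∑ i, C (t i : ℝ) * X i * pderiv i f)) 1 := by
  induction f using MvPolynomial.induction_on with
  | C a => simpa using hasDerivAt_const (1 : ℝ) a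
  | add p q hp hq => simpa [mul_add, Finset.sum_add_distrib] using hp.fun_add hq
  | mul_X p j hp =>
    have hXj : HasDerivAt (fun ε : ℝ => ε ^ t j * x j) (t j * x j) 1 := by
      simpa using (hasDerivAt_pow (t j) (1 : ℝ)).mul_const (x j)
    simp only [eval_mul, eval_X]
    refine (hp.fun_mul hXj).congr_deriv ?_
    simp only [map_natCast, map_sum, map_mul, map_add, eval_X, one_pow, one_mul, Finset.sum_mul,
      Derivation.leibniz, pderiv_X, Pi.single_apply, smul_eq_mul, mul_ite, mul_one, mul_zero,
      mul_add, Finset.sum_add_distrib, Finset.sum_ite_eq, Finset.mem_univ, ↓reduceIte]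
    rw [add_comm]
    congr 1
    · ring
    · exact Finset.sum_congr rfl fun i _ => by ring

theorem sum_weight_mul_X_mul_pderiv_of_eval_scaling (t : σ → ℕ) (k : ℕ)
    (f : MvPolynomial σ ℝ)
    (hf : ∀ (ε : ℝ) (x : σ → ℝ), eval (fun i => ε ^ t i * x i) f = ε ^ k * eval x f) :
    ∑ i, C (t i : ℝ) * X i * pderiv i f = C (k : ℝ) * f := by
  refine MvPolynomial.funext fun x => ?_
  have hscaled : HasDerivAt (fun ε : ℝ => ε ^ k * eval x f) (k * eval x f) 1 := by
    simpa using (hasDerivAt_pow k (1 : ℝ)).mul_const (eval x f)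
  have hpoly := hasDerivAt_eval_weighted_scaling t x f
  simp_rw [hf] at hpoly
  simpa using hpoly.unique hscaled

end MvPolynomial

/-- `μ·X_{h*} = X_g + ν·D₀` with `g = ((l+|t̂|)/(k+l+|t̂|))·μ·h*` and
`ν = (1/(k+l+|t̂|))·∇μ·X_{h*}`. -/
theorem smul_ham_splitting (t : Fin 2 → ℕ) (ht : ∀ i, 0 < t i) (k l : ℕ)
    (μ hstar : MvPolynomial (Fin 2) ℝ)
    (hμ : IsQH t k μ) (hhs : IsQH t (l + t 0 + t 1) hstar) :
    ∀ j, μ * ham hstar j =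
      ham (C (((l + t 0 + t 1 : ℕ) : ℝ) / ((k + l + t 0 + t 1 : ℕ) : ℝ)) * (μ * hstar)) j
      + (C (((k + l + t 0 + t 1 : ℕ) : ℝ))⁻¹ * ∑ i, pderiv i μ * ham hstar i) * D0 t j := by
  have eulerμ := sum_weight_mul_X_mul_pderiv_of_eval_scaling t k μ hμ
  have eulerh := sum_weight_mul_X_mul_pderiv_of_eval_scaling t _ hstar hhs
  rw [Fin.sum_univ_two] at eulerμ eulerh
  set m : ℝ := ((l + t 0 + t 1 : ℕ) : ℝ)
  set n : ℝ := ((k + l + t 0 + t 1 : ℕ) : ℝ)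
  have hn : n ≠ 0 := by have := ht 0; positivity
  have hinv : C n⁻¹ * C n = (1 : MvPolynomial (Fin 2) ℝ) := by
    rw [← C_mul, inv_mul_cancel₀ hn, C_1]
  have hdiv : C (m / n) = C n⁻¹ * (C m : MvPolynomial (Fin 2) ℝ) := by
    rw [← C_mul, div_eq_inv_mul]
  have hsum : C n = C (k : ℝ) + (C m : MvPolynomial (Fin 2) ℝ) := by
    rw [← C_add]; congr 1; push_cast [n, m]; ring
  intro j
  fin_cases j <;>
    simp only [ham, D0, Fin.mk_zero, Fin.mk_one, Fin.isValue, Matrix.cons_val_zero,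
      Matrix.cons_val_one, Fin.sum_univ_two, pderiv_mul, pderiv_C, hdiv,
      zero_mul, zero_add]
  · linear_combination (μ * pderiv 1 hstar) * hinv + (C n⁻¹ * pderiv 1 hstar) * eulerμ
      - (C n⁻¹ * pderiv 1 μ) * eulerh - (C n⁻¹ * μ * pderiv 1 hstar) * hsum
  · linear_combination (-(μ * pderiv 0 hstar)) * hinv - (C n⁻¹ * pderiv 0 hstar) * eulerμ
      + (C n⁻¹ * pderiv 0 μ) * eulerh + (C n⁻¹ * μ * pderiv 0 hstar) * hsum
end
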